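/- arXiv:0812.1304 — 4 statements merged into one kernel-verified Lean document; each statement's English description precedes it below -/
import Mathlib

section
/- Every SG-hereditary commutative ring is coherent, i.e., if every submodule of a projective R-module is strongly Gorenstein projective, then every finitely generated ideal of R is finitely presented. -/
noncomputable section

universe u

variable (R : Type u) [CommRing R]

/-- `IsShortExact R f g` says that `0 → A → B → C → 0` is a short exact sequence. -/
def IsShortExact {A B C : Type u} [AddCommGroup A] [Module R A] [AddCommGroup B] [Module R B]
    [AddCommGroup C] [Module R C] (f : A →ₗ[R] B) (g : B →ₗ[R] C) : Prop :=
  Function.Injective f ∧ Function.Surjective g ∧ LinearMap.range f = LinearMap.ker g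

/-- A module `M` is Gorenstein projective if there is a complete projective resolution
`⋯ → P i → P (i+1) → ⋯` (an exact sequence of projective modules which remains exact after
applying `Hom(-, Q)` for every projective module `Q`) with `M ≅ Im (P 0 → P 1)`. -/
def IsGorensteinProjective (M : Type u) [AddCommGroup M] [Module R M] : Prop :=
  ∃ (P : ℤ → Type u) (_ : ∀ i, AddCommGroup (P i)) (_ : ∀ i, Module R (P i))
    (d : ∀ i, P i →ₗ[R] P (i + 1)),
    (∀ i, Module.Projective R (P i)) ∧
    (∀ i, LinearMap.range (d i) = LinearMap.ker (d (i + 1))) ∧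
    Nonempty (M ≃ₗ[R] LinearMap.range (d 0)) ∧
    (∀ (Q : Type u) (_ : AddCommGroup Q) (_ : Module R Q), Module.Projective R Q →
      ∀ (i : ℤ) (g : P (i + 1) →ₗ[R] Q), g.comp (d i) = 0 →
        ∃ h : P (i + 1 + 1) →ₗ[R] Q, h.comp (d (i + 1)) = g)

/-- A module `M` is strongly Gorenstein projective if there is a complete projective
resolution of the form `⋯ → P →f P →f P → ⋯` with `M ≅ Im f`. -/
def IsStronglyGorensteinProjective (M : Type u) [AddCommGroup M] [Module R M] : Prop :=
  ∃ (P : Type u) (_ : AddCommGroup P) (_ : Module R P) (f : P →ₗ[R] P),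
    Module.Projective R P ∧
    LinearMap.range f = LinearMap.ker f ∧
    Nonempty (M ≃ₗ[R] LinearMap.range f) ∧
    (∀ (Q : Type u) (_ : AddCommGroup Q) (_ : Module R Q), Module.Projective R Q →
      ∀ g : P →ₗ[R] Q, g.comp f = 0 → ∃ h : P →ₗ[R] Q, h.comp f = g)

/-- A module `M` is Gorenstein flat if there is an exact sequence of flat modules
`⋯ → F i → F (i+1) → ⋯` which remains exact after applying `- ⊗ I` for every injective
module `I`, with `M ≅ Im (F 0 → F 1)`. -/
def IsGorensteinFlat (M : Type u) [AddCommGroup M] [Module R M] : Prop :=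
  ∃ (F : ℤ → Type u) (_ : ∀ i, AddCommGroup (F i)) (_ : ∀ i, Module R (F i))
    (d : ∀ i, F i →ₗ[R] F (i + 1)),
    (∀ i, Module.Flat R (F i)) ∧
    (∀ i, LinearMap.range (d i) = LinearMap.ker (d (i + 1))) ∧
    Nonempty (M ≃ₗ[R] LinearMap.range (d 0)) ∧
    (∀ (I : Type u) (_ : AddCommGroup I) (_ : Module R I), Module.Injective R I →
      ∀ i : ℤ, LinearMap.range (LinearMap.rTensor I (d i)) =
        LinearMap.ker (LinearMap.rTensor I (d (i + 1))))

/-- A module `M` is strongly Gorenstein flat if there is an exact sequence of flat modules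
of the form `⋯ → F →f F →f F → ⋯` which remains exact after applying `- ⊗ I` for every
injective module `I`, with `M ≅ Im f`. -/
def IsStronglyGorensteinFlat (M : Type u) [AddCommGroup M] [Module R M] : Prop :=
  ∃ (F : Type u) (_ : AddCommGroup F) (_ : Module R F) (f : F →ₗ[R] F),
    Module.Flat R F ∧
    LinearMap.range f = LinearMap.ker f ∧
    Nonempty (M ≃ₗ[R] LinearMap.range f) ∧
    (∀ (I : Type u) (_ : AddCommGroup I) (_ : Module R I), Module.Injective R I →
      LinearMap.range (LinearMap.rTensor I f) = LinearMap.ker (LinearMap.rTensor I f))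

/-- `ProjDimLE R M n` : the projective dimension of `M` is at most `n`, i.e. there is an exact
sequence `0 → P n → ⋯ → P 0 → M → 0` with each `P i` projective. -/
def ProjDimLE (M : Type u) [AddCommGroup M] [Module R M] (n : ℕ) : Prop :=
  ∃ (P : ℕ → Type u) (_ : ∀ i, AddCommGroup (P i)) (_ : ∀ i, Module R (P i))
    (d : ∀ i, P (i + 1) →ₗ[R] P i) (ε : P 0 →ₗ[R] M),
    (∀ i, Module.Projective R (P i)) ∧
    (∀ i, n < i → Subsingleton (P i)) ∧
    Function.Surjective ε ∧
    LinearMap.ker ε = LinearMap.range (d 0) ∧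
    (∀ i, LinearMap.ker (d i) = LinearMap.range (d (i + 1)))

/-- `InjDimLE R M n` : the injective dimension of `M` is at most `n`, i.e. there is an exact
sequence `0 → M → E 0 → ⋯ → E n → 0` with each `E i` injective. -/
def InjDimLE (M : Type u) [AddCommGroup M] [Module R M] (n : ℕ) : Prop :=
  ∃ (E : ℕ → Type u) (_ : ∀ i, AddCommGroup (E i)) (_ : ∀ i, Module R (E i))
    (d : ∀ i, E i →ₗ[R] E (i + 1)) (η : M →ₗ[R] E 0),
    (∀ i, Module.Injective R (E i)) ∧
    (∀ i, n < i → Subsingleton (E i)) ∧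
    Function.Injective η ∧
    LinearMap.range η = LinearMap.ker (d 0) ∧
    (∀ i, LinearMap.range (d i) = LinearMap.ker (d (i + 1)))

/-- `FlatDimLE R M n` : the flat dimension of `M` is at most `n`. -/
def FlatDimLE (M : Type u) [AddCommGroup M] [Module R M] (n : ℕ) : Prop :=
  ∃ (F : ℕ → Type u) (_ : ∀ i, AddCommGroup (F i)) (_ : ∀ i, Module R (F i))
    (d : ∀ i, F (i + 1) →ₗ[R] F i) (ε : F 0 →ₗ[R] M),
    (∀ i, Module.Flat R (F i)) ∧
    (∀ i, n < i → Subsingleton (F i)) ∧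
    Function.Surjective ε ∧
    LinearMap.ker ε = LinearMap.range (d 0) ∧
    (∀ i, LinearMap.ker (d i) = LinearMap.range (d (i + 1)))

/-- `GProjDimLE R M n` : the Gorenstein projective dimension of `M` is at most `n`, i.e.
there is an exact sequence `0 → G n → ⋯ → G 0 → M → 0` with each `G i` Gorenstein
projective. -/
def GProjDimLE (M : Type u) [AddCommGroup M] [Module R M] (n : ℕ) : Prop :=
  ∃ (G : ℕ → Type u) (_ : ∀ i, AddCommGroup (G i)) (_ : ∀ i, Module R (G i))
    (d : ∀ i, G (i + 1) →ₗ[R] G i) (ε : G 0 →ₗ[R] M),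
    (∀ i, IsGorensteinProjective R (G i)) ∧
    (∀ i, n < i → Subsingleton (G i)) ∧
    Function.Surjective ε ∧
    LinearMap.ker ε = LinearMap.range (d 0) ∧
    (∀ i, LinearMap.ker (d i) = LinearMap.range (d (i + 1)))

/-- `GFlatDimLE R M n` : the Gorenstein flat dimension of `M` is at most `n`. -/
def GFlatDimLE (M : Type u) [AddCommGroup M] [Module R M] (n : ℕ) : Prop :=
  ∃ (G : ℕ → Type u) (_ : ∀ i, AddCommGroup (G i)) (_ : ∀ i, Module R (G i))
    (d : ∀ i, G (i + 1) →ₗ[R] G i) (ε : G 0 →ₗ[R] M),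
    (∀ i, IsGorensteinFlat R (G i)) ∧
    (∀ i, n < i → Subsingleton (G i)) ∧
    Function.Surjective ε ∧
    LinearMap.ker ε = LinearMap.range (d 0) ∧
    (∀ i, LinearMap.ker (d i) = LinearMap.range (d (i + 1)))

/-- A module is finitely presented if it is the quotient of a finite free module by a
finitely generated submodule of relations. -/
def IsFinitelyPresented (M : Type u) [AddCommGroup M] [Module R M] : Prop :=
  ∃ (n : ℕ) (f : (Fin n → R) →ₗ[R] M), Function.Surjective f ∧ (LinearMap.ker f).FG

/-- A ring is coherent if every finitely generated ideal is finitely presented. -/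
def IsCoherentRing : Prop :=
  ∀ I : Ideal R, I.FG → IsFinitelyPresented R I

/-- `ExtVanishes R M N i` : `Ext_R^i(M, N) = 0`. -/
def ExtVanishes (M N : Type u) [AddCommGroup M] [Module R M] [AddCommGroup N] [Module R N]
    (i : ℕ) : Prop :=
  Subsingleton (((Ext R (ModuleCat.{u} R) i).obj
    (Opposite.op (ModuleCat.of R M))).obj (ModuleCat.of R N))

/-- A ring is hereditary if every submodule of a projective module is projective. -/
def IsHereditaryRing : Prop :=
  ∀ (P : Type u) (_ : AddCommGroup P) (_ : Module R P), Module.Projective R P →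
    ∀ N : Submodule R P, Module.Projective R N

/-- A ring is semihereditary if every finitely generated ideal is projective. -/
def IsSemihereditaryRing : Prop :=
  ∀ I : Ideal R, I.FG → Module.Projective R I

/-- A ring is Gorenstein hereditary if every submodule of a projective module is
Gorenstein projective. -/
def IsGHereditaryRing : Prop :=
  ∀ (P : Type u) (_ : AddCommGroup P) (_ : Module R P), Module.Projective R P →
    ∀ N : Submodule R P, IsGorensteinProjective R N

/-- A ring is strongly Gorenstein hereditary if every submodule of a projective module is
strongly Gorenstein projective. -/
def IsSGHereditaryRing : Prop :=
  ∀ (P : Type u) (_ : AddCommGroup P) (_ : Module R P), Module.Projective R P →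
    ∀ N : Submodule R P, IsStronglyGorensteinProjective R N

/-- A ring is Gorenstein semihereditary if it is coherent and every submodule of a flat
module is Gorenstein flat. -/
def IsGSemihereditaryRing : Prop :=
  IsCoherentRing R ∧
    ∀ (F : Type u) (_ : AddCommGroup F) (_ : Module R F), Module.Flat R F →
      ∀ N : Submodule R F, IsGorensteinFlat R N

/-- A ring is strongly Gorenstein semihereditary if it is coherent and every submodule of a
flat module is strongly Gorenstein flat. -/
def IsSGSemihereditaryRing : Prop :=
  IsCoherentRing R ∧
    ∀ (F : Type u) (_ : AddCommGroup F) (_ : Module R F), Module.Flat R F →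
      ∀ N : Submodule R F, IsStronglyGorensteinFlat R N

/-- Key lemma: if `M` is finite, `P` is projective, and `π : P → M` is surjective with
finitely generated kernel, then `M` is finitely presented (Schanuel-type argument). -/
theorem fg_ker_of_proj {R : Type u} [CommRing R] {P M : Type u}
    [AddCommGroup P] [Module R P] [AddCommGroup M] [Module R M]
    (hP : Module.Projective R P) (π : P →ₗ[R] M) (hπ : Function.Surjective π)
    (hker : (LinearMap.ker π).FG) [Module.Finite R M] :
    ∃ (n : ℕ) (f : (Fin n → R) →ₗ[R] M), Function.Surjective f ∧ (LinearMap.ker f).FG := by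
  obtain ⟨n, g, hg⟩ := Module.Finite.exists_fin' R M
  refine ⟨n, g, hg, ?_⟩
  set F := Fin n → R
  set h : F × P →ₗ[R] M := g.comp (LinearMap.fst R F P) - π.comp (LinearMap.snd R F P) with hh
  set X : Submodule R (F × P) := LinearMap.ker h with hX
  have memX : ∀ x : F × P, x ∈ X ↔ g x.1 = π x.2 := by
    intro x
    simp [hX, hh, LinearMap.mem_ker, sub_eq_zero]
  -- X is finitely generated
  have hXfg : X.FG := by
    apply Submodule.fg_of_fg_map_of_fg_inf_ker (LinearMap.fst R F P)
    · have : Submodule.map (LinearMap.fst R F P) X = ⊤ := by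
        rw [Submodule.eq_top_iff']
        intro a
        obtain ⟨b, hb⟩ := hπ (g a)
        exact ⟨(a, b), (memX (a, b)).2 hb.symm, rfl⟩
      rw [this]
      exact Module.finite_def.mp inferInstance
    · have : X ⊓ LinearMap.ker (LinearMap.fst R F P) =
        Submodule.map (LinearMap.inr R F P) (LinearMap.ker π) := by
        ext x
        constructor
        · rintro ⟨hx1, hx2⟩
          have h1 : x.1 = 0 := hx2
          refine ⟨x.2, ?_, ?_⟩
          · have := (memX x).1 hx1
            rw [h1, map_zero] at this
            exact this.symm
          · simp [LinearMap.inr, ← h1]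
        · rintro ⟨b, hb, rfl⟩
          exact ⟨(memX _).2 (by simpa using hb.symm), rfl⟩
      rw [this]
      exact hker.map _
  -- the projection X → P is surjective
  have p2surj : Function.Surjective ((LinearMap.snd R F P).comp X.subtype) := by
    intro b
    obtain ⟨a, ha⟩ := hg (π b)
    exact ⟨⟨(a, b), (memX (a, b)).2 ha⟩, rfl⟩
  obtain ⟨s, hs⟩ := Module.projective_lifting_property ((LinearMap.snd R F P).comp X.subtype)
    (LinearMap.id : P →ₗ[R] P) p2surj
  -- define retraction r : X → F
  set q1 : X →ₗ[R] F := (LinearMap.fst R F P).comp X.subtype with hq1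
  set p2 : X →ₗ[R] P := (LinearMap.snd R F P).comp X.subtype with hp2
  set r : X →ₗ[R] F := q1 - q1.comp (s.comp p2) with hr
  have hrange : LinearMap.range r = LinearMap.ker g := by
    ext a
    constructor
    · rintro ⟨x, rfl⟩
      have hx := (memX x.1).1 x.2
      have hy := (memX (s (p2 x)).1).1 (s (p2 x)).2
      have hsp : ((s (p2 x)) : F × P).2 = p2 x := by
        have := congrArg (fun m => m (p2 x)) hs
        exact this
      simp only [LinearMap.mem_ker, hr, LinearMap.sub_apply, LinearMap.comp_apply, map_sub]
      rw [hq1]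
      simp only [LinearMap.comp_apply, LinearMap.fst_apply, Submodule.coe_subtype]
      rw [hx, hy, hsp]
      simp [hp2]
    · intro ha
      have hx : ((a, 0) : F × P) ∈ X := (memX (a, 0)).2 (by simpa using ha)
      refine ⟨⟨(a, 0), hx⟩, ?_⟩
      have hp20 : p2 ⟨(a, 0), hx⟩ = 0 := rfl
      simp [hr, hp20, hq1]
  rw [← hrange]
  have : Module.Finite R X := Module.Finite.iff_fg.mpr hXfg
  rw [LinearMap.range_eq_map]
  exact Submodule.FG.map r (Module.finite_def.mp inferInstance)

/-- Theorem 2.6(1): every strongly Gorenstein hereditary ring is coherent. -/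
theorem statement_4 (R : Type u) [CommRing R] (h : IsSGHereditaryRing R) :
    IsCoherentRing R := by
  intro I hI
  obtain ⟨P, _, _, f, hPproj, hrk, ⟨e⟩, -⟩ := h R inferInstance inferInstance inferInstance I
  haveI : Module.Finite R I := Module.Finite.iff_fg.mpr hI
  haveI : Module.Finite R (LinearMap.range f) := Module.Finite.equiv e
  set π : P →ₗ[R] ↥I := (e.symm : LinearMap.range f →ₗ[R] ↥I).comp f.rangeRestrict with hπdef
  have hπsurj : Function.Surjective π := by
    intro x
    obtain ⟨y, hy⟩ := f.surjective_rangeRestrict (e x)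
    exact ⟨y, by simp [hπdef, hy]⟩
  have hkerπ : LinearMap.ker π = LinearMap.ker f := by
    rw [hπdef, LinearMap.ker_comp, LinearEquiv.ker, Submodule.comap_bot,
      LinearMap.ker_rangeRestrict]
  have hkfg : (LinearMap.ker π).FG := by
    rw [hkerπ, ← hrk]
    exact Module.Finite.iff_fg.mp inferInstance
  exact fg_ker_of_proj hPproj π hπsurj hkfg
end
end

section
/- Every coherent G-Dedekind domain is Noetherian; that is, if R is a coherent integral domain such that every submodule of a projective R-module is Gorenstein projective, then R is Noetherian. In particular every SG-Dedekind domain is Noetherian. -/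
noncomputable section

universe u

variable (R : Type u) [CommRing R]

section Aux
variable {R}

theorem torsionFree_of_projective [IsDomain R] {P : Type u} [AddCommGroup P] [Module R P]
    (hP : Module.Projective R P) {r : R} {x : P} (hr : r ≠ 0) (hx : r • x = 0) : x = 0 := by
  obtain ⟨s, hs⟩ := Module.projective_def.mp hP
  have h1 : r • s x = 0 := by rw [← map_smul, hx, map_zero]
  rcases smul_eq_zero.mp h1 with h | h
  · exact absurd h hr
  · have := congrArg (Finsupp.linearCombination R (id : P → P)) h
    rw [hs x, map_zero] at this
    exact this

theorem pullback_ker_fg {M₁ M₂ C : Type u} [AddCommGroup M₁] [Module R M₁]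
    [AddCommGroup M₂] [Module R M₂] [AddCommGroup C] [Module R C]
    (hM₁ : Module.Projective R M₁) [Module.Finite R M₂]
    (π : M₁ →ₗ[R] C) (α : M₂ →ₗ[R] C) (hπ : Function.Surjective π)
    (hα : Function.Surjective α) (hker : (LinearMap.ker π).FG) :
    (LinearMap.ker α).FG := by
  classical
  set X : Submodule R (M₁ × M₂) :=
    LinearMap.ker (π ∘ₗ LinearMap.fst R M₁ M₂ - α ∘ₗ LinearMap.snd R M₁ M₂) with hX
  have hmemX : ∀ p : M₁ × M₂, p ∈ X ↔ π p.1 = α p.2 := by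
    intro p
    simp [hX, LinearMap.mem_ker, sub_eq_zero]
  -- X is finitely generated
  have hXfg : X.FG := by
    apply Submodule.fg_of_fg_map_of_fg_inf_ker (LinearMap.snd R M₁ M₂)
    · have : X.map (LinearMap.snd R M₁ M₂) = ⊤ := by
        rw [Submodule.eq_top_iff']
        intro v
        obtain ⟨u, hu⟩ := hπ (α v)
        exact ⟨(u, v), (hmemX (u, v)).mpr hu, rfl⟩
      rw [this]
      exact Module.Finite.fg_top
    · have : X ⊓ LinearMap.ker (LinearMap.snd R M₁ M₂)
          = (LinearMap.ker π).map (LinearMap.inl R M₁ M₂) := by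
        ext p
        constructor
        · intro hp
          obtain ⟨h1, h2⟩ := Submodule.mem_inf.mp hp
          have h2' : p.2 = 0 := LinearMap.mem_ker.mp h2
          have h1' : π p.1 = α p.2 := (hmemX p).mp h1
          rw [h2', map_zero] at h1'
          refine ⟨p.1, LinearMap.mem_ker.mpr h1', ?_⟩
          rw [LinearMap.inl_apply]
          exact Prod.ext rfl h2'.symm
        · rintro ⟨u, hu, rfl⟩
          have hu' : π u = 0 := LinearMap.mem_ker.mp hu
          refine Submodule.mem_inf.mpr ⟨(hmemX _).mpr (by simp [hu']), ?_⟩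
          exact LinearMap.mem_ker.mpr rfl
      rw [this]
      exact hker.map _
  -- split over M₁ using projectivity
  have hsurj1 : Function.Surjective ((LinearMap.fst R M₁ M₂) ∘ₗ X.subtype) := by
    intro u
    obtain ⟨v, hv⟩ := hα (π u)
    exact ⟨⟨(u, v), (hmemX (u, v)).mpr hv.symm⟩, rfl⟩
  obtain ⟨σ, hσ⟩ := Module.projective_lifting_property (R := R)
    ((LinearMap.fst R M₁ M₂) ∘ₗ X.subtype) (LinearMap.id (R := R) (M := M₁)) hsurj1
  -- the retraction
  set τ : ↥X →ₗ[R] M₂ :=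
    (LinearMap.snd R M₁ M₂) ∘ₗ X.subtype ∘ₗ
      (LinearMap.id - σ ∘ₗ (LinearMap.fst R M₁ M₂) ∘ₗ X.subtype) with hτ
  have hrange : LinearMap.range τ = LinearMap.ker α := by
    ext v
    constructor
    · rintro ⟨x, rfl⟩
      set y : ↥X := x - σ ((x : M₁ × M₂).1) with hy
      have hτx : τ x = (y : M₁ × M₂).2 := rfl
      have h1 : (y : M₁ × M₂).1 = 0 := by
        have hc : (y : M₁ × M₂) = (x : M₁ × M₂) - (σ ((x : M₁ × M₂).1) : M₁ × M₂) := rfl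
        rw [hc, Prod.fst_sub, sub_eq_zero]
        simpa using (LinearMap.congr_fun hσ ((x : M₁ × M₂).1)).symm
      have h2 : π (y : M₁ × M₂).1 = α (y : M₁ × M₂).2 := (hmemX _).mp y.2
      rw [h1, map_zero] at h2
      rw [LinearMap.mem_ker, hτx]
      exact h2.symm
    · intro hv
      have hv' : α v = 0 := LinearMap.mem_ker.mp hv
      refine ⟨⟨(0, v), (hmemX _).mpr (by simp [hv'])⟩, ?_⟩
      have hσ0 : σ (0 : M₁) = 0 := map_zero σ
      show ((⟨(0, v), _⟩ - σ (0 : M₁) : ↥X) : M₁ × M₂).2 = v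
      rw [hσ0, sub_zero]
  rw [← hrange, LinearMap.range_eq_map]
  exact ((Submodule.fg_top X).mpr hXfg).map τ

theorem ker_pi_fg (hcoh : IsCoherentRing R) :
    ∀ (m s : ℕ) (θ : (Fin s → R) →ₗ[R] (Fin m → R)), (LinearMap.ker θ).FG := by
  intro m
  induction m with
  | zero =>
    intro s θ
    have h : LinearMap.ker θ = ⊤ := by
      rw [Submodule.eq_top_iff']
      intro x
      exact LinearMap.mem_ker.mpr (Subsingleton.elim _ _)
    rw [h]
    exact Module.Finite.fg_top
  | succ m ih =>
    intro s θ
    set θ₂ : (Fin s → R) →ₗ[R] R := (LinearMap.proj (0 : Fin (m + 1))) ∘ₗ θ with hθ₂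
    set θ₁ : (Fin s → R) →ₗ[R] (Fin m → R) :=
      (LinearMap.funLeft R R (Fin.succ : Fin m → Fin (m + 1))) ∘ₗ θ with hθ₁
    have hI₂fg : (LinearMap.range θ₂).FG := by
      rw [LinearMap.range_eq_map]
      exact Module.Finite.fg_top.map θ₂
    obtain ⟨n, g, hgsurj, hgker⟩ := hcoh (LinearMap.range θ₂) hI₂fg
    have hk2 : (LinearMap.ker θ₂).FG := by
      have := pullback_ker_fg (M₁ := (Fin n → R)) (C := ↥(LinearMap.range θ₂))
        inferInstance g θ₂.rangeRestrict hgsurj θ₂.surjective_rangeRestrict hgker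
      rwa [LinearMap.ker_rangeRestrict] at this
    haveI : Module.Finite R ↥(LinearMap.ker θ₂) := Module.Finite.iff_fg.mpr hk2
    obtain ⟨t, ρ, hρ⟩ := Module.Finite.exists_fin' R ↥(LinearMap.ker θ₂)
    set φ : (Fin t → R) →ₗ[R] (Fin s → R) := (LinearMap.ker θ₂).subtype ∘ₗ ρ with hφ
    have hker : LinearMap.ker θ = (LinearMap.ker (θ₁ ∘ₗ φ)).map φ := by
      ext u
      constructor
      · intro hu
        have hu' : θ u = 0 := LinearMap.mem_ker.mp hu
        have hu2 : u ∈ LinearMap.ker θ₂ := by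
          rw [LinearMap.mem_ker, hθ₂, LinearMap.comp_apply, hu']
          rfl
        obtain ⟨x, hx⟩ := hρ ⟨u, hu2⟩
        have hφx : φ x = u := by
          rw [hφ, LinearMap.comp_apply, hx]
          rfl
        refine Submodule.mem_map.mpr ⟨x, ?_, ?_⟩
        · refine LinearMap.mem_ker.mpr ?_
          rw [LinearMap.comp_apply, hφx, hθ₁, LinearMap.comp_apply, hu']
          rfl
        · exact hφx
      · intro hmem
        obtain ⟨x, hx, rfl⟩ := Submodule.mem_map.mp hmem
        have hx' : θ₁ (φ x) = 0 := LinearMap.mem_ker.mp hx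
        have hx2 : θ₂ (φ x) = 0 := by
          have : (φ x : Fin s → R) ∈ LinearMap.ker θ₂ := (ρ x).2
          exact LinearMap.mem_ker.mp this
        rw [LinearMap.mem_ker]
        funext i
        refine Fin.cases ?_ ?_ i
        · exact hx2
        · intro j
          exact congrFun hx' j
    rw [hker]
    exact (ih t (θ₁ ∘ₗ φ)).map φ

def interIdeal (c0 : R) {n : ℕ} (c : Fin n → R) : Ideal R where
  carrier := {a : R | ∀ i, a * c i ∈ Ideal.span {c0}}
  add_mem' := by
    intro a b ha hb i
    rw [add_mul]
    exact Ideal.add_mem _ (ha i) (hb i)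
  zero_mem' := by
    intro i
    rw [zero_mul]
    exact Submodule.zero_mem _
  smul_mem' := by
    intro r a ha i
    rw [smul_eq_mul, mul_assoc]
    exact Ideal.mul_mem_left _ _ (ha i)

theorem mem_interIdeal {c0 : R} {n : ℕ} {c : Fin n → R} {a : R} :
    a ∈ interIdeal c0 c ↔ ∀ i, a * c i ∈ Ideal.span {c0} := Iff.rfl

theorem interIdeal_fg (hcoh : IsCoherentRing R) (c0 : R) {n : ℕ} (c : Fin n → R) :
    (interIdeal c0 c).FG := by
  classical
  set ψ : (Fin (n + 1) → R) →ₗ[R] (Fin n → R) :=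
    LinearMap.pi (fun j => c j • LinearMap.proj (0 : Fin (n + 1)) -
      c0 • LinearMap.proj (Fin.succ j)) with hψ
  have hψapp : ∀ (w : Fin (n + 1) → R) (j : Fin n),
      ψ w j = c j * w 0 - c0 * w j.succ := by
    intro w j
    simp [hψ, LinearMap.pi_apply]
  have hkey : interIdeal c0 c = (LinearMap.ker ψ).map (LinearMap.proj (0 : Fin (n + 1))) := by
    ext a
    constructor
    · intro ha
      have hy : ∀ i, ∃ z : R, z * c0 = a * c i := by
        intro i
        obtain ⟨z, hz⟩ := Ideal.mem_span_singleton'.mp (ha i)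
        exact ⟨z, hz⟩
      choose y hy' using hy
      refine Submodule.mem_map.mpr ⟨Fin.cons a y, ?_, ?_⟩
      · refine LinearMap.mem_ker.mpr ?_
        funext j
        rw [hψapp]
        simp only [Fin.cons_zero, Fin.cons_succ]
        rw [mul_comm c0 (y j), hy' j, mul_comm a (c j), sub_self]
        rfl
      · simp [LinearMap.proj_apply]
    · intro hmem
      obtain ⟨w, hw, rfl⟩ := Submodule.mem_map.mp hmem
      intro i
      have h0 : ψ w i = 0 := congrFun (LinearMap.mem_ker.mp hw) i
      rw [hψapp, sub_eq_zero] at h0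
      refine Ideal.mem_span_singleton'.mpr ⟨w i.succ, ?_⟩
      show w i.succ * c0 = (LinearMap.proj (0 : Fin (n+1))) w * c i
      rw [LinearMap.proj_apply, mul_comm (w i.succ) c0, ← h0, mul_comm (c i) (w 0)]
  rw [hkey]
  exact (ker_pi_fg hcoh n (n + 1) ψ).map _

theorem rankone_structure [IsDomain R] (I : Ideal R) (hI : I ≠ ⊥)
    {P₁ P₂ : Type u} [AddCommGroup P₁] [Module R P₁] [AddCommGroup P₂] [Module R P₂]
    (h₁ : Module.Projective R P₁) (h₂ : Module.Projective R P₂)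
    (d₁ : P₁ →ₗ[R] P₂) (M₀ : Submodule R P₁) (hM₀ : M₀ = LinearMap.ker d₁)
    (e : ↥I ≃ₗ[R] ↥M₀) :
    ∃ (c0 : R), c0 ≠ 0 ∧ ∃ (n : ℕ) (c : Fin n → R),
      Nonempty (↥I ≃ₗ[R] ↥(interIdeal c0 c)) := by
  classical
  obtain ⟨s, hs⟩ := Module.projective_def.mp h₁
  have hsinj : Function.Injective s := hs.injective
  set N : Submodule R (P₁ →₀ R) := M₀.map s with hN
  set E : ↥I ≃ₗ[R] ↥N := e.trans (Submodule.equivMapOfInjective s hsinj M₀) with hE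
  -- saturation of N in the free module
  have hsat : ∀ (r : R) (x : P₁ →₀ R), r ≠ 0 → r • x ∈ N → x ∈ N := by
    intro r x hr hrx
    obtain ⟨m', hm'M, hm'eq⟩ := Submodule.mem_map.mp hrx
    set p := Finsupp.linearCombination R (id : P₁ → P₁) x with hp
    have h1 : r • p = m' := by
      rw [hp, ← map_smul, ← hm'eq]
      exact hs m'
    have hxsp : x = s p := by
      have h0 : r • (x - s p) = 0 := by
        rw [smul_sub, ← map_smul s, h1, hm'eq, sub_self]
      rcases smul_eq_zero.mp h0 with h | h
      · exact absurd h hr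
      · rwa [sub_eq_zero] at h
    have hpM : p ∈ M₀ := by
      rw [hM₀, LinearMap.mem_ker]
      have hd : d₁ m' = 0 := by
        have := hm'M
        rw [hM₀, LinearMap.mem_ker] at this
        exact this
      have hd' : r • d₁ p = 0 := by
        rw [← map_smul, h1, hd]
      exact torsionFree_of_projective h₂ hr hd'
    rw [hxsp]
    exact Submodule.mem_map.mpr ⟨p, hpM, rfl⟩
  -- a nonzero element of N
  obtain ⟨x₀, hx₀I, hx₀⟩ := (Submodule.ne_bot_iff I).mp hI
  set ξ₀ : ↥I := ⟨x₀, hx₀I⟩ with hξ₀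
  set m₀ : ↥N := E ξ₀ with hm₀
  have hm₀ne : (m₀ : P₁ →₀ R) ≠ 0 := by
    intro h
    have h1 : m₀ = 0 := Subtype.ext h
    have h2 : ξ₀ = 0 := by
      apply E.injective
      rw [← hm₀, h1, map_zero]
    exact hx₀ (congrArg Subtype.val h2)
  -- the rank one relation
  have hrel : ∀ x : ↥N, x₀ • (x : P₁ →₀ R) = ((E.symm x : ↥I) : R) • (m₀ : P₁ →₀ R) := by
    intro x
    have h1 : x₀ • x = ((E.symm x : ↥I) : R) • m₀ := by
      have h2 : E (x₀ • E.symm x) = E (((E.symm x : ↥I) : R) • ξ₀) := by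
        congr 1
        apply Subtype.ext
        show x₀ * ((E.symm x : ↥I) : R) = ((E.symm x : ↥I) : R) * x₀
        ring
      rw [map_smul, map_smul, E.apply_symm_apply] at h2
      rw [hm₀]
      exact h2
    exact congrArg Subtype.val h1
  have hcoord : ∀ (x : ↥N) (j : P₁),
      x₀ * (x : P₁ →₀ R) j = ((E.symm x : ↥I) : R) * (m₀ : P₁ →₀ R) j := by
    intro x j
    have := DFunLike.congr_fun (hrel x) j
    rwa [Finsupp.smul_apply, Finsupp.smul_apply, smul_eq_mul, smul_eq_mul] at this
  obtain ⟨j₀, hj₀⟩ : ∃ j, (m₀ : P₁ →₀ R) j ≠ 0 := by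
    by_contra h
    push_neg at h
    exact hm₀ne (Finsupp.ext h)
  set c0 : R := (m₀ : P₁ →₀ R) j₀ with hc0
  set S := (m₀ : P₁ →₀ R).support with hS
  set n := S.card with hn
  set en : Fin n ≃ {j // j ∈ S} := S.equivFin.symm with hen
  set c : Fin n → R := fun i => (m₀ : P₁ →₀ R) ((en i) : P₁) with hc
  have keyA : ∀ a : R, a ∈ interIdeal c0 c ↔
      ∀ j : P₁, a * (m₀ : P₁ →₀ R) j ∈ Ideal.span {c0} := by
    intro a
    rw [mem_interIdeal]
    constructor
    · intro h j
      by_cases hj : j ∈ S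
      · have := h (en.symm ⟨j, hj⟩)
        rw [hc] at this
        simpa using this
      · have : (m₀ : P₁ →₀ R) j = 0 := Finsupp.notMem_support_iff.mp hj
        rw [this, mul_zero]
        exact Submodule.zero_mem _
    · intro h i
      exact h _
  -- the evaluation map
  set toA : ↥N →ₗ[R] R := (Finsupp.lapply j₀) ∘ₗ N.subtype with htoA
  have htoAapp : ∀ x : ↥N, toA x = (x : P₁ →₀ R) j₀ := fun x => rfl
  have hmemA : ∀ x : ↥N, toA x ∈ interIdeal c0 c := by
    intro x
    rw [keyA]
    intro j
    set ξ : R := ((E.symm x : ↥I) : R) with hξ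
    have e1 : x₀ * (x : P₁ →₀ R) j₀ = ξ * c0 := hcoord x j₀
    have e2 : x₀ * (x : P₁ →₀ R) j = ξ * (m₀ : P₁ →₀ R) j := hcoord x j
    have key : (x : P₁ →₀ R) j₀ * (m₀ : P₁ →₀ R) j = c0 * (x : P₁ →₀ R) j := by
      apply mul_left_cancel₀ hx₀
      calc x₀ * ((x : P₁ →₀ R) j₀ * (m₀ : P₁ →₀ R) j)
          = (x₀ * (x : P₁ →₀ R) j₀) * (m₀ : P₁ →₀ R) j := by ring
        _ = (ξ * c0) * (m₀ : P₁ →₀ R) j := by rw [e1]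
        _ = c0 * (ξ * (m₀ : P₁ →₀ R) j) := by ring
        _ = c0 * (x₀ * (x : P₁ →₀ R) j) := by rw [e2]
        _ = x₀ * (c0 * (x : P₁ →₀ R) j) := by ring
    rw [htoAapp, key]
    exact Ideal.mem_span_singleton'.mpr ⟨(x : P₁ →₀ R) j, by ring⟩
  have hinjA : ∀ x : ↥N, toA x = 0 → x = 0 := by
    intro x hx
    rw [htoAapp] at hx
    have e1 : x₀ * (x : P₁ →₀ R) j₀ = ((E.symm x : ↥I) : R) * c0 := hcoord x j₀
    rw [hx, mul_zero] at e1
    have hξ0 : ((E.symm x : ↥I) : R) = 0 := by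
      rcases mul_eq_zero.mp e1.symm with h | h
      · exact h
      · exact absurd h hj₀
    have : E.symm x = 0 := Subtype.ext hξ0
    have := congrArg E this
    rwa [E.apply_symm_apply, map_zero] at this
  have hsurjA : ∀ a : R, a ∈ interIdeal c0 c → ∃ x : ↥N, toA x = a := by
    intro a ha
    rw [keyA] at ha
    have hz : ∀ j : P₁, ∃ z : R, z * c0 = a * (m₀ : P₁ →₀ R) j := by
      intro j
      exact Ideal.mem_span_singleton'.mp (ha j)
    choose z hz' using hz
    set x : P₁ →₀ R := ∑ j ∈ S, Finsupp.single j (z j) with hx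
    have hxapp : ∀ j, x j = if j ∈ S then z j else 0 := by
      intro j
      rw [hx, Finsupp.finset_sum_apply]
      rw [Finset.sum_congr rfl (fun k _ => Finsupp.single_apply (a := k) (b := z k) (a' := j))]
      exact Finset.sum_ite_eq' S j z
    have hc0x : c0 • x = a • (m₀ : P₁ →₀ R) := by
      ext j
      rw [Finsupp.smul_apply, Finsupp.smul_apply, smul_eq_mul, smul_eq_mul, hxapp]
      by_cases hj : j ∈ S
      · rw [if_pos hj, mul_comm c0 (z j), hz' j]
      · rw [if_neg hj, mul_zero, Finsupp.notMem_support_iff.mp hj, mul_zero]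
    have hxN : x ∈ N := by
      apply hsat c0 x hj₀
      rw [hc0x]
      exact N.smul_mem a m₀.2
    refine ⟨⟨x, hxN⟩, ?_⟩
    rw [htoAapp]
    show x j₀ = a
    have hj₀S : j₀ ∈ S := Finsupp.mem_support_iff.mpr hj₀
    rw [hxapp, if_pos hj₀S]
    have := hz' j₀
    rw [← hc0] at this
    exact mul_right_cancel₀ hj₀ (by rw [this, mul_comm])
  -- assemble the equivalence
  set φA : ↥N →ₗ[R] ↥(interIdeal c0 c) :=
    LinearMap.codRestrict (interIdeal c0 c) toA hmemA with hφA
  have hbij : Function.Bijective φA := by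
    constructor
    · intro x y hxy
      have : toA x = toA y := congrArg Subtype.val hxy
      have h0 : toA (x - y) = 0 := by
        have hms : toA (x - y) = toA x - toA y := map_sub toA x y
        rw [hms, this, sub_self]
      exact eq_of_sub_eq_zero (hinjA _ h0)
    · intro b
      obtain ⟨x, hxx⟩ := hsurjA (b : R) b.2
      exact ⟨x, Subtype.ext hxx⟩
  exact ⟨c0, hj₀, n, c, ⟨E.trans (LinearEquiv.ofBijective φA hbij)⟩⟩

theorem gp_of_sgp {M : Type u} [AddCommGroup M] [Module R M]
    (h : IsStronglyGorensteinProjective R M) : IsGorensteinProjective R M := by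
  obtain ⟨P, iAC, iM, f, hP, hrk, hiso, hlift⟩ := h
  refine ⟨fun _ => P, fun _ => iAC, fun _ => iM, fun _ => f, fun _ => hP, fun _ => hrk,
    hiso, ?_⟩
  intro Q aQ mQ hQ i g hg
  exact hlift Q aQ mQ hQ g hg

theorem coherent_of_sghered (h : IsSGHereditaryRing R) : IsCoherentRing R := by
  intro I hIfg
  have hsgp : IsStronglyGorensteinProjective R ↥I :=
    h R inferInstance inferInstance inferInstance I
  obtain ⟨P, iAC, iM, f, hP, hrk, ⟨e⟩, -⟩ := hsgp
  letI := iAC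
  letI := iM
  haveI hIfin : Module.Finite R ↥I := Module.Finite.iff_fg.mpr hIfg
  haveI hRfin : Module.Finite R ↥(LinearMap.range f) := Module.Finite.equiv e
  have hkerfg : (LinearMap.ker f).FG := by
    rw [← hrk]
    exact Module.Finite.iff_fg.mp hRfin
  obtain ⟨nn, α₀, hα₀⟩ := Module.Finite.exists_fin' R ↥I
  have hkerα : (LinearMap.ker ((e : ↥I →ₗ[R] ↥(LinearMap.range f)) ∘ₗ α₀)).FG := by
    apply pullback_ker_fg hP f.rangeRestrict _ f.surjective_rangeRestrict
    · exact e.surjective.comp hα₀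
    · rwa [LinearMap.ker_rangeRestrict]
  have hkereq : LinearMap.ker ((e : ↥I →ₗ[R] ↥(LinearMap.range f)) ∘ₗ α₀)
      = LinearMap.ker α₀ := by
    rw [LinearMap.ker_comp, LinearEquiv.ker]
    rfl
  exact ⟨nn, α₀, hα₀, by rwa [hkereq] at hkerα⟩

theorem noetherian_main [IsDomain R] (hcoh : IsCoherentRing R) (hgh : IsGHereditaryRing R) :
    IsNoetherianRing R := by
  rw [isNoetherianRing_iff_ideal_fg]
  intro I
  by_cases hI : I = ⊥
  · rw [hI]
    exact Submodule.fg_bot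
  have hGP : IsGorensteinProjective R ↥I :=
    hgh R inferInstance inferInstance inferInstance I
  obtain ⟨P, iAC, iM, d, hproj, hexact, hiso, -⟩ := hGP
  letI := iAC 0
  letI := iM 0
  letI := iAC (0 + 1 : ℤ)
  letI := iM (0 + 1 : ℤ)
  letI := iAC (0 + 1 + 1 : ℤ)
  letI := iM (0 + 1 + 1 : ℤ)
  obtain ⟨e₀⟩ := hiso
  obtain ⟨c0, hc0, n, c, ⟨eq⟩⟩ := rankone_structure I hI (hproj (0 + 1)) (hproj (0 + 1 + 1))
    (d (0 + 1)) (LinearMap.range (d 0)) (hexact 0) e₀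
  have hAfg := interIdeal_fg hcoh c0 c
  haveI hAfin : Module.Finite R ↥(interIdeal c0 c) := Module.Finite.iff_fg.mpr hAfg
  haveI : Module.Finite R ↥I := Module.Finite.equiv eq.symm
  exact Module.Finite.iff_fg.mp this


end Aux

/-- Theorem 2.6(2): every coherent Gorenstein Dedekind domain is Noetherian; in particular,
every strongly Gorenstein Dedekind domain is Noetherian. -/
theorem statement_5 (R : Type u) [CommRing R] [IsDomain R] :
    (IsCoherentRing R → IsGHereditaryRing R → IsNoetherianRing R) ∧
    (IsSGHereditaryRing R → IsNoetherianRing R) := by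
  constructor
  · intro hcoh hgh
    exact noetherian_main hcoh hgh
  · intro hsg
    have hcoh := coherent_of_sghered hsg
    have hgh : IsGHereditaryRing R := by
      intro P iAC iM hP N
      letI := iAC
      letI := iM
      exact gp_of_sgp (hsg P iAC iM hP N)
    exact noetherian_main hcoh hgh
end
end

section
/- Let R be a commutative ring and M an R-module. Suppose there is a short exact sequence 0 → G → Q → M → 0 with Q projective, a short exact sequence 0 → G → P → G → 0 with P projective, and Ext_R^1(G,Q) = 0. Then there exists a short exact sequence 0 → M → X → M → 0 where X fits in a short exact sequence 0 → P → Q⊕Q → X → 0; in particular pd_R(X) ≤ 1. -/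
/-!
`Ext¹(G, Q)` may be computed on the periodic projective resolution `⋯ → P → P → P → G` with
differential `ι₂ ∘ π₂`; there its vanishing means that every map `G → Q` extends along `ι₂`.
Extend `ι₁` to `φ : P → Q`. Then `c = (φ, ι₁ ∘ π₂) : P → Q × Q` is injective and its cokernel `X`
is a self-extension of `M`: `π₁ q ↦ [(q, 0)]` embeds `M`, `[(q₁, q₂)] ↦ π₁ q₂` projects onto `M`,
and exactness in the middle comes from `[(q₁, ι₁ (π₂ p))] = [(q₁ - φ p, 0)]`. The projective
resolution `0 → P → Q × Q → X → 0` gives `pd X ≤ 1`.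
-/

noncomputable section

universe u

variable (R : Type u) [CommRing R]

section ShortExact

variable {R : Type u} [CommRing R] {A B C : Type u} [AddCommGroup A] [Module R A]
  [AddCommGroup B] [Module R B] [AddCommGroup C] [Module R C] {f : A →ₗ[R] B} {g : B →ₗ[R] C}

theorem IsShortExact.exact (h : IsShortExact R f g) : Function.Exact f g :=
  LinearMap.exact_iff.2 h.2.2.symm

theorem IsShortExact.exact_comp_self {f : A →ₗ[R] B} {g : B →ₗ[R] A} (h : IsShortExact R f g) :
    Function.Exact (f ∘ₗ g) (f ∘ₗ g) := by
  intro y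
  rw [LinearMap.comp_apply, map_eq_zero_iff f h.1, h.exact, LinearMap.coe_comp,
    Set.range_comp, h.2.1.range_eq, Set.image_univ]

end ShortExact

section PeriodicResolution

open CategoryTheory

variable {R : Type u} [CommRing R] {G P : Type u} [AddCommGroup G] [Module R G]
  [AddCommGroup P] [Module R P] {ι : G →ₗ[R] P} {π : P →ₗ[R] G}

def periodicComplex (h : IsShortExact R ι π) : ChainComplex (ModuleCat.{u} R) ℕ :=
  ChainComplex.of (fun _ => ModuleCat.of R P) (fun _ => ModuleCat.ofHom (ι ∘ₗ π))
    (fun _ => by ext p; exact h.exact_comp_self.apply_apply_eq_zero p)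

theorem periodicComplex_d (h : IsShortExact R ι π) (n : ℕ) :
    (periodicComplex h).d (n + 1) n = ModuleCat.ofHom (ι ∘ₗ π) := by
  simp [periodicComplex]

def periodicComplexπ (h : IsShortExact R ι π) :
    periodicComplex h ⟶ (ChainComplex.single₀ (ModuleCat.{u} R)).obj (ModuleCat.of R G) :=
  (ChainComplex.toSingle₀Equiv _ _).symm ⟨ModuleCat.ofHom π, by
    rw [periodicComplex_d]; ext p; exact h.exact.apply_apply_eq_zero (π p)⟩

def periodicResolution (h : IsShortExact R ι π) [Module.Projective R P] :
    ProjectiveResolution (ModuleCat.of R G) where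
  complex := periodicComplex h
  projective _ := (IsProjective.iff_projective P).mp inferInstance
  π := periodicComplexπ h
  quasiIso := ⟨fun n => by
    cases n with
    | zero =>
      rw [ChainComplex.quasiIsoAt₀_iff, ShortComplex.quasiIso_iff_of_zeros' _ rfl rfl rfl,
        ShortComplex.moduleCat_exact_iff_range_eq_ker, ModuleCat.epi_iff_surjective]
      exact ⟨(LinearMap.range_comp_of_range_eq_top ι (LinearMap.range_eq_top.2 h.2.1)).trans
        h.2.2, h.2.1⟩
    | succ n =>
      rw [quasiIsoAt_iff_exactAt' _ _ (ChainComplex.exactAt_succ_single_obj _ _),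
        HomologicalComplex.exactAt_iff' _ (n + 2) (n + 1) n (by simp) (by simp),
        ShortComplex.moduleCat_exact_iff_range_eq_ker]
      change LinearMap.range ((periodicComplex h).d (n + 2) (n + 1)).hom =
        LinearMap.ker ((periodicComplex h).d (n + 1) n).hom
      rw [periodicComplex_d, periodicComplex_d]
      exact (LinearMap.exact_iff.1 h.exact_comp_self).symm⟩

end PeriodicResolution

section ExtLifting

open CategoryTheory

variable {R : Type u} [CommRing R] {G P Q : Type u} [AddCommGroup G] [Module R G]
  [AddCommGroup P] [Module R P] [AddCommGroup Q] [Module R Q] {ι : G →ₗ[R] P} {π : P →ₗ[R] G}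

theorem ExtVanishes.exists_comp_eq_of_comp_eq_zero (hExt : ExtVanishes R G Q 1)
    (h : IsShortExact R ι π) [Module.Projective R P] (g : P →ₗ[R] Q)
    (hg : g ∘ₗ (ι ∘ₗ π) = 0) : ∃ k : P →ₗ[R] Q, k ∘ₗ (ι ∘ₗ π) = g := by
  let Y := ModuleCat.of R Q
  let C := (periodicResolution h).complex.linearYonedaObj R Y
  have hC : C.ExactAt 1 := by
    rw [HomologicalComplex.exactAt_iff_isZero_homology]
    have : Subsingleton (((Ext R (ModuleCat.{u} R) 1).obj
        (Opposite.op (ModuleCat.of R G))).obj Y) := hExt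
    exact (Limits.IsZero.of_iso (ModuleCat.isZero_of_subsingleton _)
      ((periodicResolution h).isoExt 1 Y).symm)
  have hd (i : ℕ) (x : C.X i) :
      C.d i (i + 1) x = (ModuleCat.ofHom (ι ∘ₗ π) ≫ x : ModuleCat.of R P ⟶ Y) := by
    simp only [C, ChainComplex.linearYonedaObj_d]
    exact congrArg (· ≫ x) (periodicComplex_d h i)
  rw [HomologicalComplex.exactAt_iff' _ 0 1 2 (by simp) (by simp),
    ShortComplex.moduleCat_exact_iff] at hC
  obtain ⟨k, hk⟩ := hC (ModuleCat.ofHom g)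
    ((hd 1 (ModuleCat.ofHom g)).trans (congrArg ModuleCat.ofHom hg))
  exact ⟨k.hom, congrArg ModuleCat.Hom.hom ((hd 0 k).symm.trans hk)⟩

theorem ExtVanishes.exists_comp_eq (hExt : ExtVanishes R G Q 1) (h : IsShortExact R ι π)
    [Module.Projective R P] (j : G →ₗ[R] Q) : ∃ φ : P →ₗ[R] Q, φ ∘ₗ ι = j := by
  obtain ⟨φ, hφ⟩ := hExt.exists_comp_eq_of_comp_eq_zero h (j ∘ₗ π) (by
    ext p; simp [h.exact.apply_apply_eq_zero])
  exact ⟨φ, (LinearMap.cancel_right h.2.1).1 hφ⟩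

end ExtLifting

section SelfExtension

variable {R : Type u} [CommRing R] {M G Q P : Type u} [AddCommGroup M] [Module R M]
  [AddCommGroup G] [Module R G] [AddCommGroup Q] [Module R Q] [AddCommGroup P] [Module R P]
  {ι₁ : G →ₗ[R] Q} {π₁ : Q →ₗ[R] M} {ι₂ : G →ₗ[R] P} {π₂ : P →ₗ[R] G} {φ : P →ₗ[R] Q}

theorem exists_eq_of_prod_apply_eq (hι₁ : Function.Injective ι₁) (h₂ : Function.Exact ι₂ π₂)
    (hφ : φ ∘ₗ ι₂ = ι₁) {p : P} {q : Q} (hp : φ.prod (ι₁ ∘ₗ π₂) p = (q, 0)) :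
    ∃ g, ι₂ g = p ∧ ι₁ g = q := by
  obtain ⟨hφp, hπ₂p⟩ := Prod.ext_iff.1 hp
  obtain ⟨g, rfl⟩ := (h₂ p).1 (hι₁ (hπ₂p.trans (map_zero ι₁).symm))
  exact ⟨g, rfl, (LinearMap.congr_fun hφ g).symm.trans hφp⟩

theorem injective_prod_comp (hι₁ : Function.Injective ι₁) (h₂ : Function.Exact ι₂ π₂)
    (hφ : φ ∘ₗ ι₂ = ι₁) : Function.Injective (φ.prod (ι₁ ∘ₗ π₂)) := by
  refine (injective_iff_map_eq_zero _).2 fun p hp => ?_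
  obtain ⟨g, rfl, hg⟩ := exists_eq_of_prod_apply_eq hι₁ h₂ hφ hp
  rw [(injective_iff_map_eq_zero ι₁).1 hι₁ g hg, map_zero]

theorem prod_apply_apply_eq_inl (h₂ : Function.Exact ι₂ π₂) (hφ : φ ∘ₗ ι₂ = ι₁) (g : G) :
    φ.prod (ι₁ ∘ₗ π₂) (ι₂ g) = (ι₁ g, 0) := by
  simp [← hφ, h₂.apply_apply_eq_zero]

abbrev SelfExt (φ : P →ₗ[R] Q) (ι₁ : G →ₗ[R] Q) (π₂ : P →ₗ[R] G) : Type u :=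
  (Q × Q) ⧸ LinearMap.range (φ.prod (ι₁ ∘ₗ π₂))

def SelfExt.proj (φ : P →ₗ[R] Q) (π₂ : P →ₗ[R] G) (h₁ : Function.Exact ι₁ π₁) : SelfExt φ ι₁ π₂ →ₗ[R] M :=
  (LinearMap.range _).liftQ (π₁ ∘ₗ LinearMap.snd R Q Q) <| by
    rintro _ ⟨p, rfl⟩
    exact h₁.apply_apply_eq_zero (π₂ p)

def SelfExt.incl (h₁ : IsShortExact R ι₁ π₁) (h₂ : Function.Exact ι₂ π₂) (hφ : φ ∘ₗ ι₂ = ι₁) :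
    M →ₗ[R] SelfExt φ ι₁ π₂ :=
  (LinearMap.range ι₁).liftQ ((LinearMap.range _).mkQ ∘ₗ LinearMap.inl R Q Q) (by
      rintro _ ⟨g, rfl⟩
      exact (Submodule.Quotient.mk_eq_zero _).2 ⟨ι₂ g, prod_apply_apply_eq_inl h₂ hφ g⟩) ∘ₗ
    (h₁.exact.linearEquivOfSurjective h₁.2.1).symm.toLinearMap

theorem SelfExt.proj_mk (h₁ : Function.Exact ι₁ π₁) (x : Q × Q) :
    SelfExt.proj φ π₂ h₁ (Submodule.Quotient.mk x) = π₁ x.2 :=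
  rfl

theorem SelfExt.incl_apply (h₁ : IsShortExact R ι₁ π₁) (h₂ : Function.Exact ι₂ π₂)
    (hφ : φ ∘ₗ ι₂ = ι₁) (q : Q) :
    SelfExt.incl h₁ h₂ hφ (π₁ q) = Submodule.Quotient.mk (q, 0) := by
  simp [SelfExt.incl]

theorem SelfExt.isShortExact (h₁ : IsShortExact R ι₁ π₁) (h₂ : IsShortExact R ι₂ π₂)
    (hφ : φ ∘ₗ ι₂ = ι₁) :
    IsShortExact R (SelfExt.incl h₁ h₂.exact hφ) (SelfExt.proj φ π₂ h₁.exact) := by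
  refine ⟨(injective_iff_map_eq_zero _).2 fun m hm => ?_, fun m => ?_,
    (LinearMap.exact_iff.1 fun x => ?_).symm⟩
  · obtain ⟨q, rfl⟩ := h₁.2.1 m
    rw [incl_apply, Submodule.Quotient.mk_eq_zero] at hm
    obtain ⟨p, hp⟩ := hm
    obtain ⟨g, -, rfl⟩ := exists_eq_of_prod_apply_eq h₁.1 h₂.exact hφ hp
    exact h₁.exact.apply_apply_eq_zero g
  · obtain ⟨q, rfl⟩ := h₁.2.1 m
    exact ⟨Submodule.Quotient.mk (0, q), rfl⟩
  · refine ⟨fun hx => ?_, ?_⟩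
    · induction x using Submodule.Quotient.induction_on with | H x => ?_
      obtain ⟨q₁, q₂⟩ := x
      obtain ⟨g, rfl⟩ := (h₁.exact q₂).1 hx
      obtain ⟨p, rfl⟩ := h₂.2.1 g
      refine ⟨π₁ (q₁ - φ p), ?_⟩
      rw [incl_apply, Submodule.Quotient.eq]
      exact ⟨-p, by simp⟩
    · rintro ⟨m, rfl⟩
      obtain ⟨q, rfl⟩ := h₁.2.1 m
      rw [incl_apply, proj_mk, map_zero]

theorem isShortExact_prod_mkQ (hι₁ : Function.Injective ι₁) (h₂ : Function.Exact ι₂ π₂)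
    (hφ : φ ∘ₗ ι₂ = ι₁) :
    IsShortExact R (φ.prod (ι₁ ∘ₗ π₂)) (LinearMap.range (φ.prod (ι₁ ∘ₗ π₂))).mkQ :=
  ⟨injective_prod_comp hι₁ h₂ hφ, Submodule.mkQ_surjective _, (Submodule.ker_mkQ _).symm⟩

end SelfExtension

section ProjectiveDimension

variable {R : Type u} [CommRing R]

def twoTermModules (A B : ModuleCat.{u} R) : ℕ → ModuleCat.{u} R
  | 0 => B
  | 1 => A
  | _ + 2 => ModuleCat.of R PUnit

theorem projDimLE_one_of_isShortExact {A B C : Type u} [AddCommGroup A] [Module R A]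
    [AddCommGroup B] [Module R B] [AddCommGroup C] [Module R C]
    [Module.Projective R A] [Module.Projective R B] {f : A →ₗ[R] B} {g : B →ₗ[R] C}
    (h : IsShortExact R f g) : ProjDimLE R C 1 := by
  let P := twoTermModules (ModuleCat.of R A) (ModuleCat.of R B)
  have hsub (i : ℕ) : Subsingleton (P (i + 2)) := inferInstanceAs (Subsingleton PUnit)
  refine ⟨fun i => P i, fun _ => inferInstance, fun _ => inferInstance,
    fun | 0 => f | _ + 1 => 0, g, ?_, ?_, h.2.1, h.2.2.symm, ?_⟩
  · rintro (_ | _ | i)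
    · exact ‹Module.Projective R B›
    · exact ‹Module.Projective R A›
    · exact (Module.Projective.of_free : Module.Projective R PUnit.{u + 1})
  · rintro (_ | _ | i) hi
    · omega
    · omega
    · exact hsub i
  · rintro (_ | i)
    · exact (LinearMap.ker_eq_bot.2 h.1).trans LinearMap.range_zero.symm
    · exact Subsingleton.elim (α := Submodule R (P (i + 2))) _ _

end ProjectiveDimension

/-- The construction in the proof of Theorem 2.4 (1 ⇒ 2): from a syzygy `G` of `M` with a
self-extension by a projective module, one gets a self-extension `0 → M → X → M → 0` with
`pd X ≤ 1`. -/
theorem statement_18 (R : Type u) [CommRing R]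
    (M G Q P : Type u) [AddCommGroup M] [Module R M] [AddCommGroup G] [Module R G]
    [AddCommGroup Q] [Module R Q] [AddCommGroup P] [Module R P]
    (hQ : Module.Projective R Q) (hP : Module.Projective R P)
    (ι₁ : G →ₗ[R] Q) (π₁ : Q →ₗ[R] M) (h₁ : IsShortExact R ι₁ π₁)
    (ι₂ : G →ₗ[R] P) (π₂ : P →ₗ[R] G) (h₂ : IsShortExact R ι₂ π₂)
    (hExt : ExtVanishes R G Q 1) :
    ∃ (X : Type u) (_ : AddCommGroup X) (_ : Module R X)
      (a : M →ₗ[R] X) (b : X →ₗ[R] M),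
      IsShortExact R a b ∧
        (∃ (c : P →ₗ[R] Q × Q) (d : Q × Q →ₗ[R] X), IsShortExact R c d) ∧
        ProjDimLE R X 1 := by
  have := hQ
  have := hP
  obtain ⟨φ, hφ⟩ := hExt.exists_comp_eq h₂ ι₁
  have hc := isShortExact_prod_mkQ h₁.1 h₂.exact hφ
  exact ⟨SelfExt φ ι₁ π₂, inferInstance, inferInstance, _, _, SelfExt.isShortExact h₁ h₂ hφ,
    ⟨_, _, hc⟩, projDimLE_one_of_isShortExact hc⟩
end
end

section
/- Let R be a commutative ring, P a projective R-module, and M a submodule of P. Suppose there exists a short exact sequence 0 → P/M → Q → P/M → 0 of R-modules with pd_R(Q) ≤ 1. Then there exists a short exact sequence 0 → M → X → M → 0 in which X is a projective R-module (X arises as the kernel of a surjection P⊕P → Q, so that 0 → X → P⊕P → Q → 0 is exact). -/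
noncomputable section

universe u

variable (R : Type u) [CommRing R]

/-!
Lift the projection `P → P/M` along `b` to `t : P → Q`. Then `(a ∘ mkQ, t) : P × P → Q` is
onto, and as in the horseshoe lemma its kernel `X` is an extension of `M = ker mkQ` by itself.
Since `pd Q ≤ 1`, some projective module maps onto `Q` with projective kernel, and Schanuel's
lemma transfers projectivity of that kernel to `X`.
-/

section

variable {R}

section Schanuel

variable {A B C : Type*} [AddCommGroup A] [Module R A] [AddCommGroup B] [Module R B]
  [AddCommGroup C] [Module R C]

def LinearMap.prodKerEquivKerCoprod (φ : A →ₗ[R] C) (ε : B →ₗ[R] C) (g : A →ₗ[R] B)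
    (hg : ε ∘ₗ g = φ) : (A × LinearMap.ker ε) ≃ₗ[R] LinearMap.ker (φ.coprod ε) where
  toFun x := ⟨(x.1, x.2 - g x.1), by simp [← hg]⟩
  invFun y := (y.1.1, ⟨y.1.2 + g y.1.1, by simpa [← hg, add_comm] using y.2⟩)
  map_add' x y := by ext <;> simp; abel
  map_smul' r x := by ext <;> simp [smul_sub]
  left_inv x := by ext <;> simp
  right_inv y := by ext <;> simp

theorem Module.Projective.of_ker_coprod (φ : A →ₗ[R] C) (ε : B →ₗ[R] C)
    [Module.Projective R (LinearMap.ker (φ.coprod ε))] (h : B →ₗ[R] A) (hh : φ ∘ₗ h = ε) :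
    Module.Projective R (LinearMap.ker φ) := by
  refine .of_split (M := LinearMap.ker (φ.coprod ε))
    ((LinearMap.inl R A B ∘ₗ (LinearMap.ker φ).subtype).codRestrict _ fun x => by simp)
    ((LinearMap.coprod LinearMap.id h ∘ₗ (LinearMap.ker (φ.coprod ε)).subtype).codRestrict _
      fun y => by simpa [← hh] using y.2) ?_
  ext x
  change (x : A) + h 0 = x
  simp

/-- Schanuel's lemma: `ker φ` is a direct summand of `ker (φ.coprod ε) ≃ A × ker ε`. -/
theorem Module.Projective.ker_of_surjective_of_projective_ker [Module.Projective R A]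
    [Module.Projective R B] {φ : A →ₗ[R] C} {ε : B →ₗ[R] C} [Module.Projective R (LinearMap.ker ε)]
    (hφ : Function.Surjective φ) (hε : Function.Surjective ε) :
    Module.Projective R (LinearMap.ker φ) := by
  obtain ⟨g, hg⟩ := Module.projective_lifting_property ε φ hε
  obtain ⟨h, hh⟩ := Module.projective_lifting_property φ ε hφ
  have := Module.Projective.of_equiv' (LinearMap.prodKerEquivKerCoprod φ ε g hg)
  exact .of_ker_coprod φ ε h hh

end Schanuel

theorem ProjDimLE.projective_ker_of_surjective {Q F : Type u} [AddCommGroup Q] [Module R Q]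
    [AddCommGroup F] [Module R F] [Module.Projective R F] (hQ : ProjDimLE R Q 1)
    {φ : F →ₗ[R] Q} (hφ : Function.Surjective φ) : Module.Projective R (LinearMap.ker φ) := by
  obtain ⟨P, _, _, d, ε, hproj, hP_triv, hε, hker, hexact⟩ := hQ
  have : Subsingleton (P 2) := hP_triv 2 (by norm_num)
  have hd : Function.Injective (d 0) := by
    rw [← LinearMap.ker_eq_bot, hexact 0, Subsingleton.elim (d 1) 0, LinearMap.range_zero]
  have := hproj 0
  have := hproj 1
  have : Module.Projective R (LinearMap.ker ε) :=
    .of_equiv' ((LinearEquiv.ofInjective (d 0) hd).trans (LinearEquiv.ofEq _ _ hker.symm))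
  exact .ker_of_surjective_of_projective_ker hφ hε

variable {P₁ P₂ Q : Type u} [AddCommGroup P₁] [Module R P₁] [AddCommGroup P₂] [Module R P₂]
  [AddCommGroup Q] [Module R Q] {M₁ : Submodule R P₁} {M₂ : Submodule R P₂}
  {a : (P₁ ⧸ M₁) →ₗ[R] Q} {b : Q →ₗ[R] P₂ ⧸ M₂} {t : P₂ →ₗ[R] Q}

theorem IsShortExact.surjective_coprod (hab : IsShortExact R a b) (ht : b ∘ₗ t = M₂.mkQ) :
    Function.Surjective ((a ∘ₗ M₁.mkQ).coprod t) := by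
  intro q
  obtain ⟨y, hy⟩ := M₂.mkQ_surjective (b q)
  have : q - t y ∈ LinearMap.range a := by
    rw [hab.2.2, LinearMap.mem_ker, map_sub, ← LinearMap.comp_apply, ht, hy, sub_self]
  obtain ⟨z, hz⟩ := this
  obtain ⟨x, rfl⟩ := Submodule.Quotient.mk_surjective M₁ z
  exact ⟨(x, y), by simp [hz]⟩

theorem IsShortExact.exists_isShortExact_ker_coprod (hab : IsShortExact R a b)
    (ht : b ∘ₗ t = M₂.mkQ) :
    ∃ (f : M₁ →ₗ[R] LinearMap.ker ((a ∘ₗ M₁.mkQ).coprod t))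
      (g : LinearMap.ker ((a ∘ₗ M₁.mkQ).coprod t) →ₗ[R] M₂), IsShortExact R f g := by
  obtain ⟨ha, -, hrange⟩ := hab
  have hba (z) : b (a z) = 0 := by
    rw [← LinearMap.mem_ker, ← hrange]
    exact LinearMap.mem_range_self a z
  have ht' (y) : b (t y) = M₂.mkQ y := LinearMap.congr_fun ht y
  have hker (x : LinearMap.ker ((a ∘ₗ M₁.mkQ).coprod t)) :
      a (M₁.mkQ (x : P₁ × P₂).1) + t (x : P₁ × P₂).2 = 0 := x.2
  refine ⟨(LinearMap.inl R P₁ P₂ ∘ₗ M₁.subtype).codRestrict _ fun m => by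
      simp [(Submodule.Quotient.mk_eq_zero M₁).mpr m.2],
    (LinearMap.snd R P₁ P₂ ∘ₗ (LinearMap.ker _).subtype).codRestrict M₂ fun x => ?_,
    fun m m' h => Subtype.ext (congrArg (fun x : LinearMap.ker _ => (x : P₁ × P₂).1) h),
    fun m => ?_, ?_⟩
  · have hx := congrArg b (hker x)
    rw [map_add, hba, zero_add, ht', map_zero] at hx
    exact (Submodule.Quotient.mk_eq_zero M₂).mp hx
  · have : t m ∈ LinearMap.range a := by
      simp [hrange, ht', (Submodule.Quotient.mk_eq_zero M₂).mpr m.2]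
    obtain ⟨z, hz⟩ := this
    obtain ⟨x, rfl⟩ := Submodule.Quotient.mk_surjective M₁ z
    exact ⟨⟨(-x, m), by simp [hz]⟩, rfl⟩
  · ext x
    refine ⟨fun ⟨m, hm⟩ => hm ▸ LinearMap.mem_ker.mpr (Subtype.ext rfl), fun hx => ?_⟩
    have h₂ : (x : P₁ × P₂).2 = 0 := congrArg Subtype.val hx
    have h₁ : a (M₁.mkQ (x : P₁ × P₂).1) = 0 := by simpa [h₂] using hker x
    have hmem : (x : P₁ × P₂).1 ∈ M₁ :=
      (Submodule.Quotient.mk_eq_zero M₁).mp (ha (h₁.trans (map_zero a).symm))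
    exact ⟨⟨_, hmem⟩, Subtype.ext (Prod.ext rfl h₂.symm)⟩

end

/-- The construction in the proof of Theorem 2.4 (2 ⇒ 1): from a self-extension of `P/M` by
a module of projective dimension at most 1, one gets a self-extension of `M` by a projective
module. -/
theorem statement_19 (R : Type u) [CommRing R]
    (P : Type u) [AddCommGroup P] [Module R P] (hP : Module.Projective R P)
    (M : Submodule R P)
    (Q : Type u) [AddCommGroup Q] [Module R Q] (hQ : ProjDimLE R Q 1)
    (a : (P ⧸ M) →ₗ[R] Q) (b : Q →ₗ[R] P ⧸ M) (hab : IsShortExact R a b) :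
    ∃ (X : Type u) (_ : AddCommGroup X) (_ : Module R X),
      Module.Projective R X ∧
        (∃ (f : M →ₗ[R] X) (g : X →ₗ[R] M), IsShortExact R f g) ∧
        (∃ (i : X →ₗ[R] P × P) (p : P × P →ₗ[R] Q), IsShortExact R i p) := by
  obtain ⟨t, ht⟩ := Module.projective_lifting_property b M.mkQ hab.2.1
  have hφ := hab.surjective_coprod ht
  exact ⟨_, _, _, hQ.projective_ker_of_surjective hφ, hab.exists_isShortExact_ker_coprod ht,
    _, _, (LinearMap.ker _).injective_subtype, hφ, Submodule.range_subtype _⟩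
end
end
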